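/- arXiv:alg-geom/9210007 — 3 statements merged into one kernel-verified Lean document; each statement's English description precedes it below -/
import Mathlib

section
/- For g ≥ 2 and for t a complex number with t not a root of unity (or as an identity of rational functions in t), one has (t^(4g-4)·F(1,t²,t^(-2),t) − t^(2g)·F(1,t²,t⁴,t)) / (1−t^(4g-2)) = ((1+t³)^(2g) − t^(2g)(1+t)^(2g)) / ((1−t²)(1−t⁴)), where F(a,b,c,t) = (a+t)^(2g)/((a−b)(a−c)) + (b+t)^(2g)/((b−a)(b−c)) + (c+t)^(2g)/((c−a)(c−b)). -/
set_option maxHeartbeats 1600000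

/-- Zagier's verification that the flip formula yields the
Harder–Narasimhan formula. -/
theorem zagier_harder_narasimhan (g : ℕ) (hg : 2 ≤ g) (t : ℂ) (ht0 : t ≠ 0)
    (ht : ∀ n : ℕ, 0 < n → t ^ n ≠ 1) :
    (fun F : ℂ → ℂ → ℂ → ℂ =>
        (t ^ (4 * g - 4) * F 1 (t ^ 2) ((t⁻¹) ^ 2) - t ^ (2 * g) * F 1 (t ^ 2) (t ^ 4)) /
            (1 - t ^ (4 * g - 2)) =
          ((1 + t ^ 3) ^ (2 * g) - t ^ (2 * g) * (1 + t) ^ (2 * g)) /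
            ((1 - t ^ 2) * (1 - t ^ 4)))
      (fun a b c =>
        (a + t) ^ (2 * g) / ((a - b) * (a - c)) +
          (b + t) ^ (2 * g) / ((b - a) * (b - c)) +
          (c + t) ^ (2 * g) / ((c - a) * (c - b))) := by
  simp only []
  obtain ⟨s, hs⟩ : ∃ s : ℂ, s = t ^ g := ⟨_, rfl⟩
  have hA : t ^ (2 * g) = s ^ 2 := by rw [hs, ← pow_mul, Nat.mul_comm]
  have hA4 : t ^ (4 * g) = s ^ 4 := by rw [hs, ← pow_mul]; ring_nf
  have hB : t ^ (4 * g - 4) = s ^ 4 / t ^ 4 := by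
    rw [← hA4, div_eq_mul_inv, ← pow_sub₀ t ht0 (by omega)]
  have hB2 : t ^ (4 * g - 2) = s ^ 4 / t ^ 2 := by
    rw [← hA4, div_eq_mul_inv, ← pow_sub₀ t ht0 (by omega)]
  have hC : (t ^ 2 + t) ^ (2 * g) = s ^ 2 * (1 + t) ^ (2 * g) := by
    rw [← hA, ← mul_pow]; ring_nf
  have hD : ((t⁻¹) ^ 2 + t) ^ (2 * g) = (1 + t ^ 3) ^ (2 * g) / s ^ 4 := by
    have e : t ^ (4 * g) = (t ^ 2) ^ (2 * g) := by
      rw [← pow_mul]; congr 1; omega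
    rw [← hA4, e, ← div_pow]
    congr 1
    field_simp
  have hE : (t ^ 4 + t) ^ (2 * g) = s ^ 2 * (1 + t ^ 3) ^ (2 * g) := by
    rw [← hA, ← mul_pow]; ring_nf
  have h1 : t ^ 2 ≠ 1 := ht 2 (by norm_num)
  have h2 : t ^ 4 ≠ 1 := ht 4 (by norm_num)
  have h1' : (1 : ℂ) - t ^ 2 ≠ 0 := sub_ne_zero.mpr (Ne.symm h1)
  have h2' : (1 : ℂ) - t ^ 4 ≠ 0 := sub_ne_zero.mpr (Ne.symm h2)
  have ht2 : t ^ 2 ≠ 0 := pow_ne_zero _ ht0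
  have ht4 : t ^ 4 ≠ 0 := pow_ne_zero _ ht0
  have h8 : t ^ 2 - 1 ≠ 0 := sub_ne_zero.mpr h1
  have h6 : t ^ 4 - 1 ≠ 0 := sub_ne_zero.mpr h2
  have h4 : t ^ 2 - t ^ 4 ≠ 0 := by
    have : t ^ 2 - t ^ 4 = t ^ 2 * (1 - t ^ 2) := by ring
    rw [this]; exact mul_ne_zero ht2 h1'
  have h7 : t ^ 4 - t ^ 2 ≠ 0 := by rw [← neg_ne_zero]; simpa using h4
  have hden : (1 : ℂ) - s ^ 4 / t ^ 2 ≠ 0 := by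
    rw [← hB2]
    exact sub_ne_zero.mpr (Ne.symm (ht (4 * g - 2) (by omega)))
  have hden' : t ^ 2 - s ^ 4 ≠ 0 := by
    intro h
    apply hden
    have h' := sub_eq_zero.mp h
    rw [← h', div_self ht2, sub_self]
  have hsne : s ≠ 0 := hs ▸ pow_ne_zero _ ht0
  rw [hB, hB2, hC, hD, hE, hA]
  simp only [inv_pow]
  generalize (1 + t) ^ (2 * g) = P
  generalize (1 + t ^ 3) ^ (2 * g) = Q
  have r1 : (1 - t ^ 2) * (1 - (t ^ 2)⁻¹) = -(1 - t ^ 2) ^ 2 / t ^ 2 := by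
    field_simp; ring
  have r2 : (t ^ 2 - 1) * (t ^ 2 - (t ^ 2)⁻¹) = (1 - t ^ 2) * (1 - t ^ 4) / t ^ 2 := by
    field_simp; ring
  have r3 : ((t ^ 2)⁻¹ - 1) * ((t ^ 2)⁻¹ - t ^ 2) = (1 - t ^ 2) * (1 - t ^ 4) / t ^ 4 := by
    field_simp
  have r4 : (1 : ℂ) - s ^ 4 / t ^ 2 = (t ^ 2 - s ^ 4) / t ^ 2 := by
    field_simp
  rw [r1, r2, r3, r4]
  simp only [div_div_eq_mul_div, div_div]
  have nb1 : -(1 - t ^ 2) ^ 2 ≠ (0 : ℂ) := neg_ne_zero.mpr (pow_ne_zero 2 h1')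
  have nb2 : (1 - t ^ 2) * (1 - t ^ 4) ≠ (0 : ℂ) := mul_ne_zero h1' h2'
  have nb3 : (t ^ 2 - 1) * (t ^ 2 - t ^ 4) ≠ (0 : ℂ) := mul_ne_zero h8 h4
  have nb4 : (t ^ 4 - 1) * (t ^ 4 - t ^ 2) ≠ (0 : ℂ) := mul_ne_zero h6 h7
  rw [div_add_div _ _ nb1 nb2, div_add_div _ _ (mul_ne_zero nb1 nb2) nb2,
    div_add_div _ _ nb2 nb3, div_add_div _ _ (mul_ne_zero nb2 nb3) nb4,
    div_mul_div_comm, mul_div_assoc',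
    div_sub_div _ _
      (mul_ne_zero (pow_ne_zero 4 ht0) (mul_ne_zero (mul_ne_zero nb1 nb2) nb2))
      (mul_ne_zero (mul_ne_zero nb2 nb3) nb4),
    div_mul_eq_mul_div, div_div,
    div_eq_div_iff
      (mul_ne_zero
        (mul_ne_zero (mul_ne_zero (pow_ne_zero 4 ht0) (mul_ne_zero (mul_ne_zero nb1 nb2) nb2))
          (mul_ne_zero (mul_ne_zero nb2 nb3) nb4))
        hden')
      nb2]
  field_simp
  ring
end

section
/- Define F(t) = (1−t^(m+2))^(−h−1)·(1−t^(m+1))^(−h'−1)·(1−t)^(−(d+g−1))·t^(−(m+n))·(1−(2m+3)(1−t)t^(m+1)−t^(2m+3))^g, where h = (d−2)m−2n and h' = −h−d+2g−2. Then F(1/t) = −F(t) as rational functions in t. -/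
/-- The rational function `F` satisfies `F(1/t) = -F(t)`. -/
theorem F_inv_eq_neg (g d m n : ℤ) (hg : 2 ≤ g) (hd : 3 ≤ d) (hm : 0 ≤ m) (hn : 0 ≤ n) :
    (fun (h h' : ℤ) =>
      (fun F : RatFunc ℚ → RatFunc ℚ => F (RatFunc.X)⁻¹ = -F RatFunc.X)
        (fun t =>
          (1 - t ^ (m + 2)) ^ (-h - 1) * (1 - t ^ (m + 1)) ^ (-h' - 1) *
              (1 - t) ^ (-(d + g - 1)) * t ^ (-(m + n)) *
            (1 - (2 * (m : RatFunc ℚ) + 3) * (1 - t) * t ^ (m + 1) - t ^ (2 * m + 3)) ^ g))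
      ((d - 2) * m - 2 * n) (-((d - 2) * m - 2 * n) - d + 2 * g - 2) := by
  simp only
  set t : RatFunc ℚ := RatFunc.X with ht
  have ht0 : t ≠ 0 := RatFunc.X_ne_zero
  have hzz : ∀ p q : ℤ, t ^ p * t ^ q = t ^ (p + q) := fun p q => (zpow_add₀ ht0 p q).symm
  have key : ∀ k : ℤ, (1 - t⁻¹ ^ k) = -(1 - t ^ k) * t ^ (-k) := by
    intro k
    have h1 : t ^ k * t ^ (-k) = 1 := by rw [hzz]; simp
    rw [inv_zpow, ← zpow_neg]
    linear_combination -h1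
  have key1 : (1 - t⁻¹) = -(1 - t) * t ^ (-1 : ℤ) := by
    have h := key 1
    rwa [zpow_one, zpow_one] at h
  have keyE : 1 - (2 * (m : RatFunc ℚ) + 3) * (1 - t⁻¹) * t⁻¹ ^ (m + 1) - t⁻¹ ^ (2 * m + 3)
      = -(1 - (2 * (m : RatFunc ℚ) + 3) * (1 - t) * t ^ (m + 1) - t ^ (2 * m + 3))
          * t ^ (-(2 * m + 3)) := by
    have e1 : t ^ (m + 1) * t ^ (-(2 * m + 3)) = t ^ (-1 : ℤ) * t ^ (-(m + 1)) := by
      rw [hzz, hzz]; ring_nf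
    have e2 : t ^ (2 * m + 3) * t ^ (-(2 * m + 3)) = 1 := by
      rw [hzz, show 2 * m + 3 + -(2 * m + 3) = 0 by ring, zpow_zero]
    rw [inv_zpow, inv_zpow, ← zpow_neg, ← zpow_neg, key1]
    linear_combination (-(2 * (m : RatFunc ℚ) + 3) * (1 - t)) * e1 - e2
  have keyT : t⁻¹ ^ (-(m + n)) = t ^ (m + n) := by
    rw [inv_zpow, ← zpow_neg, neg_neg]
  have negsplit : ∀ (x y : RatFunc ℚ) (p : ℤ),
      (-x * y) ^ p = (-1 : RatFunc ℚ) ^ p * x ^ p * y ^ p := by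
    intro x y p
    rw [show -x * y = -1 * x * y by ring, mul_zpow, mul_zpow]
  have tpow : ∀ p q : ℤ, (t ^ q) ^ p = t ^ (q * p) := fun p q => (zpow_mul t q p).symm
  rw [key (m + 2), key (m + 1), keyE, key1, keyT, negsplit, negsplit, negsplit, negsplit,
    tpow, tpow, tpow, tpow]
  set p1 : ℤ := -((d - 2) * m - 2 * n) - 1 with hp1
  set p2 : ℤ := -(-((d - 2) * m - 2 * n) - d + 2 * g - 2) - 1 with hp2
  set p3 : ℤ := -(d + g - 1) with hp3
  have hsign : ((-1 : RatFunc ℚ)) ^ p1 * (-1) ^ p2 * (-1) ^ p3 * (-1) ^ g = -1 := by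
    rw [← zpow_add₀ ((by norm_num : (-1 : RatFunc ℚ) ≠ 0)),
      ← zpow_add₀ ((by norm_num : (-1 : RatFunc ℚ) ≠ 0)),
      ← zpow_add₀ ((by norm_num : (-1 : RatFunc ℚ) ≠ 0))]
    exact Odd.neg_one_zpow ⟨-g, by rw [hp1, hp2, hp3]; ring⟩
  have htpow : t ^ (-(m + 2) * p1) * t ^ (-(m + 1) * p2) * t ^ (-1 * p3) * t ^ (m + n)
      * t ^ (-(2 * m + 3) * g) = t ^ (-(m + n)) := by
    rw [hzz, hzz, hzz, hzz]
    congr 1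
    rw [hp1, hp2, hp3]; ring
  set A := (1 - t ^ (m + 2)) ^ p1
  set B := (1 - t ^ (m + 1)) ^ p2
  set C := (1 - t) ^ p3
  set E := (1 - (2 * (m : RatFunc ℚ) + 3) * (1 - t) * t ^ (m + 1) - t ^ (2 * m + 3)) ^ g
  set X1 := ((-1 : RatFunc ℚ)) ^ p1
  set X2 := ((-1 : RatFunc ℚ)) ^ p2
  set X3 := ((-1 : RatFunc ℚ)) ^ p3
  set X4 := ((-1 : RatFunc ℚ)) ^ g
  set T1 := t ^ (-(m + 2) * p1)
  set T2 := t ^ (-(m + 1) * p2)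
  set T3 := t ^ (-1 * p3)
  set T4 := t ^ (m + n)
  set T5 := t ^ (-(2 * m + 3) * g)
  set Tm := t ^ (-(m + n))
  linear_combination (A * B * C * E * (T1 * T2 * T3 * T4 * T5)) * hsign
    + (-(A * B * C * E)) * htpow
end

section
/- Verlinde-type identity: for integers g ≥ 2, k ≥ 1, and d with d and k not both odd, (2k+4)^(g−1) · Σ over ζ with ζ^(k+2)=1, ζ≠1 of (−1)^d · ζ^((k+2)d/2) · (−ζ/(1−ζ)²)^(g−1) equals ((k+2)/2)^(g−1) · Σ_{j=1}^{k+1} (−1)^(d(j+1)) / (sin(jπ/(k+2)))^(2g−2). -/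
/-!
Writing the nontrivial `(k+2)`-th roots of unity as `ζ = exp (2iθ)` with `θ = jπ/(k+2)`,
`1 ≤ j ≤ k+1`, one has `1 - ζ = -2i sin θ · exp (iθ)`, so `-ζ/(1-ζ)² = 1/(4 sin² θ)`; and
`ζ ^ ((k+2)d/2) = exp (iπ j d) = (-1)^(jd)`. The identity then holds summand by summand.
-/

open Finset Complex
open scoped Real

theorem IsPrimitiveRoot.sum_nthRoots_one_erase_one {R M : Type*} [CommRing R] [IsDomain R]
    [DecidableEq R] [AddCommMonoid M] {μ : R} {n : ℕ} (hμ : IsPrimitiveRoot μ (n + 1))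
    (f : R → M) :
    ∑ ζ ∈ (Polynomial.nthRoots (n + 1) (1 : R)).toFinset.erase 1, f ζ =
      ∑ j ∈ Icc 1 n, f (μ ^ j) := by
  refine (sum_bij (fun j _ => μ ^ j) ?_ ?_ ?_ fun _ _ => rfl).symm
  · intro j hj
    rw [mem_Icc] at hj
    rw [mem_erase, Multiset.mem_toFinset, Polynomial.mem_nthRoots n.succ_pos, pow_right_comm,
      hμ.pow_eq_one, one_pow]
    exact ⟨hμ.pow_ne_one_of_pos_of_lt (by omega) (by omega), rfl⟩
  · intro i hi j hj h
    rw [mem_Icc] at hi hj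
    exact hμ.pow_inj (by omega) (by omega) h
  · intro ζ hζ
    rw [mem_erase, Multiset.mem_toFinset, Polynomial.mem_nthRoots n.succ_pos] at hζ
    obtain ⟨i, hi, rfl⟩ := hμ.eq_pow_of_pow_eq_one hζ.2
    have hi0 : i ≠ 0 := by rintro rfl; exact hζ.1 (pow_zero μ)
    exact ⟨i, mem_Icc.2 ⟨by omega, by omega⟩, rfl⟩

theorem exp_two_pi_mul_I_div_pow (n j : ℕ) :
    exp (2 * π * I / n) ^ j = exp (2 * (((j : ℝ) * π / n : ℝ) : ℂ) * I) := by
  rw [← exp_nat_mul]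
  push_cast
  ring_nf

theorem exp_two_mul_nat_mul_pi_div_zpow {n : ℕ} (hn : n ≠ 0) (j : ℕ) {d e : ℤ}
    (h : 2 * e = n * d) :
    exp (2 * (((j : ℝ) * π / n : ℝ) : ℂ) * I) ^ e = (-1) ^ ((j : ℤ) * d) := by
  rw [← exp_int_mul, ← exp_pi_mul_I, ← exp_int_mul]
  congr 1
  have hn' : (n : ℂ) ≠ 0 := by exact_mod_cast hn
  have h' : 2 * (e : ℂ) = n * d := by exact_mod_cast h
  push_cast
  field_simp
  linear_combination (j : ℂ) * h'

theorem one_sub_exp_two_mul_I (z : ℂ) : 1 - exp (2 * z * I) = -2 * I * sin z * exp (z * I) := by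
  have h : exp (-z * I) * exp (z * I) = 1 := by rw [← exp_add]; simp
  rw [sin, show 2 * z * I = z * I + z * I by ring, exp_add]
  linear_combination I ^ 2 * h + (1 - exp (z * I) ^ 2) * I_sq

theorem neg_exp_div_one_sub_exp_sq (z : ℂ) :
    -exp (2 * z * I) / (1 - exp (2 * z * I)) ^ 2 = 1 / (4 * sin z ^ 2) := by
  have hexp : exp (2 * z * I) = exp (z * I) ^ 2 := by rw [← exp_nat_mul]; ring_nf
  have h0 : exp (z * I) ^ 2 ≠ 0 := pow_ne_zero _ (exp_ne_zero _)
  calc -exp (2 * z * I) / (1 - exp (2 * z * I)) ^ 2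
      = -1 * exp (z * I) ^ 2 / (-(4 * sin z ^ 2) * exp (z * I) ^ 2) := by
        rw [one_sub_exp_two_mul_I, hexp, mul_pow, mul_pow, mul_pow, I_sq]; ring
    _ = 1 / (4 * sin z ^ 2) := by rw [mul_div_mul_right _ _ h0, neg_div_neg_eq]

theorem verlinde_summand {n : ℕ} (hn : n ≠ 0) (g j : ℕ) {d e : ℤ} (he : 2 * e = n * d) :
    (2 * n : ℂ) ^ (g - 1) *
        ((-1) ^ d * exp (2 * (((j : ℝ) * π / n : ℝ) : ℂ) * I) ^ e *
          (-exp (2 * (((j : ℝ) * π / n : ℝ) : ℂ) * I) /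
            (1 - exp (2 * (((j : ℝ) * π / n : ℝ) : ℂ) * I)) ^ 2) ^ (g - 1)) =
      (n / 2 : ℂ) ^ (g - 1) *
        ((-1) ^ (d * ((j : ℤ) + 1)) / (Real.sin ((j : ℝ) * π / n) : ℂ) ^ (2 * g - 2)) := by
  rw [exp_two_mul_nat_mul_pi_div_zpow hn j he, neg_exp_div_one_sub_exp_sq, ← ofReal_sin]
  set s : ℂ := (Real.sin ((j : ℝ) * π / n) : ℂ)
  have hsign : (-1 : ℂ) ^ d * (-1) ^ ((j : ℤ) * d) = (-1) ^ (d * ((j : ℤ) + 1)) := by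
    rw [← zpow_add₀ (by norm_num)]
    congr 1
    ring
  have hpow : (2 * n : ℂ) ^ (g - 1) * (1 / (4 * s ^ 2)) ^ (g - 1) =
      (n / 2 : ℂ) ^ (g - 1) / s ^ (2 * g - 2) := by
    rw [show 2 * g - 2 = 2 * (g - 1) by omega, pow_mul, ← div_pow, ← mul_pow]
    ring
  rw [← hsign]
  linear_combination (-1 : ℂ) ^ d * (-1) ^ ((j : ℤ) * d) * hpow

theorem verlinde_identity_general (g k : ℕ) (d : ℤ) (hdk : Even (d * (k : ℤ))) :
    (2 * (k : ℂ) + 4) ^ (g - 1) *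
        ∑ ζ ∈ ((Polynomial.nthRoots (k + 2) (1 : ℂ)).toFinset.erase 1),
          (-1 : ℂ) ^ d * ζ ^ ((((k : ℤ) + 2) * d) / 2) * (-ζ / (1 - ζ) ^ 2) ^ (g - 1) =
      (((k : ℂ) + 2) / 2) ^ (g - 1) *
        ∑ j ∈ Finset.Icc 1 (k + 1),
          (-1 : ℂ) ^ (d * ((j : ℤ) + 1)) /
            ((Real.sin ((j : ℝ) * Real.pi / ((k : ℝ) + 2)) : ℂ)) ^ (2 * g - 2) := by
  have hμ : IsPrimitiveRoot (exp (2 * π * I / (k + 2 : ℕ))) (k + 1 + 1) :=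
    isPrimitiveRoot_exp _ (by omega)
  have he : 2 * (((k : ℤ) + 2) * d / 2) = (k + 2 : ℕ) * d := by
    have h2 : ((k : ℤ) + 2) * d = d * k + 2 * d := by ring
    push_cast
    exact Int.mul_ediv_cancel' (h2 ▸ hdk.two_dvd.add (dvd_mul_right 2 d))
  rw [mul_sum, mul_sum, hμ.sum_nthRoots_one_erase_one]
  refine sum_congr rfl fun j _ => ?_
  rw [exp_two_pi_mul_I_div_pow]
  convert verlinde_summand (n := k + 2) (by omega) g j he using 2 <;> push_cast <;> ring

/-- Verlinde-type identity: the sum over nontrivial `(k+2)`-th roots of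
unity equals the trigonometric Verlinde sum. -/
theorem verlinde_identity (g k : ℕ) (d : ℤ) (hg : 2 ≤ g) (hk : 1 ≤ k)
    (hdk : Even (d * (k : ℤ))) :
    (2 * (k : ℂ) + 4) ^ (g - 1) *
        ∑ ζ ∈ ((Polynomial.nthRoots (k + 2) (1 : ℂ)).toFinset.erase 1),
          (-1 : ℂ) ^ d * ζ ^ ((((k : ℤ) + 2) * d) / 2) * (-ζ / (1 - ζ) ^ 2) ^ (g - 1) =
      (((k : ℂ) + 2) / 2) ^ (g - 1) *
        ∑ j ∈ Finset.Icc 1 (k + 1),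
          (-1 : ℂ) ^ (d * ((j : ℤ) + 1)) /
            ((Real.sin ((j : ℝ) * Real.pi / ((k : ℝ) + 2)) : ℂ)) ^ (2 * g - 2) :=
  verlinde_identity_general g k d hdk
end
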